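/- arXiv:2006.09089 — 6 statements merged into one kernel-verified Lean document; each statement's English description precedes it below -/
import Mathlib

section
/- Let p, q, r ≥ 3 be integers and θ real. The Hermitian matrix H (unit diagonal, H₁₂ = cos(π/p), H₂₃ = cos(π/q), H₁₃ = cos(π/r)e^{iθ}) has signature (2,1) if and only if cos(θ) < (−1 + cos²(π/p) + cos²(π/q) + cos²(π/r)) / (2 cos(π/p) cos(π/q) cos(π/r)). -/
/-!
The trace of `H` is `3`, so its eigenvalues cannot all be negative; a real triple with positive
sum has exactly two positive entries and one negative entry iff its product is negative.
The product of the eigenvalues is `det H = 1 - a² - b² - c² + 2abc cos θ` with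
`a, b, c = cos (π / p), cos (π / q), cos (π / r)`, and these cosines are positive since
`p, q, r > 2`, so dividing by `2abc` gives the bound on `cos θ`.
-/

open Real Complex Matrix

lemma signature_two_one_iff_prod_neg {f : Fin 3 → ℝ} (hsum : 0 < ∑ i, f i) :
    ((Finset.univ.filter fun i => 0 < f i).card = 2 ∧
      (Finset.univ.filter fun i => f i < 0).card = 1) ↔ ∏ i, f i < 0 := by
  simp only [Finset.card_filter, Fin.sum_univ_three, Fin.prod_univ_three] at hsum ⊢
  rw [mul_neg_iff, mul_pos_iff, mul_neg_iff]
  rcases lt_trichotomy (f 0) 0 with h0 | h0 | h0 <;>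
  rcases lt_trichotomy (f 1) 0 with h1 | h1 | h1 <;>
  rcases lt_trichotomy (f 2) 0 with h2 | h2 | h2 <;>
  simp [*, not_lt_of_gt]
  all_goals linarith

lemma cos_pi_div_pos {x : ℝ} (hx : 2 < x) : 0 < Real.cos (π / x) := by
  apply Real.cos_pos_of_mem_Ioo
  constructor
  · linarith [div_pos Real.pi_pos (by linarith : (0 : ℝ) < x), Real.pi_pos]
  · rw [div_lt_div_iff₀ (by linarith) two_pos]
    nlinarith [Real.pi_pos]

lemma det_gram (a b c θ : ℝ) :
    (!![1, (a : ℂ), (c : ℂ) * Complex.exp (θ * Complex.I);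
        (a : ℂ), 1, (b : ℂ);
        (c : ℂ) * Complex.exp (-θ * Complex.I), (b : ℂ), 1]).det =
      ((1 - a ^ 2 - b ^ 2 - c ^ 2 + 2 * a * b * c * Real.cos θ : ℝ) : ℂ) := by
  have hprod : Complex.exp (θ * Complex.I) * Complex.exp (-θ * Complex.I) = 1 := by
    rw [← Complex.exp_add]; ring_nf; exact Complex.exp_zero
  have hsum : Complex.exp (θ * Complex.I) + Complex.exp (-θ * Complex.I) = 2 * Complex.cos θ := by
    rw [Complex.cos]; ring_nf
  simp only [det_fin_three, of_apply, cons_val', cons_val_zero, cons_val_fin_one, cons_val_one,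
    cons_val, mul_one, one_mul]
  push_cast
  linear_combination (a * b * c : ℂ) * hsum - (c : ℂ) ^ 2 * hprod

/-- The Gram matrix of a complex hyperbolic (p,q,r) triangle group has signature (2,1)
(two positive and one negative eigenvalue) iff the stated bound on cos θ holds. -/
theorem gram_signature (p q r : ℤ) (hp : 3 ≤ p) (hq : 3 ≤ q) (hr : 3 ≤ r) (θ : ℝ)
    (H : Matrix (Fin 3) (Fin 3) ℂ)
    (hH : H = !![1, (Real.cos (π / p) : ℂ), (Real.cos (π / r) : ℂ) * Complex.exp (θ * Complex.I);
         (Real.cos (π / p) : ℂ), 1, (Real.cos (π / q) : ℂ);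
         (Real.cos (π / r) : ℂ) * Complex.exp (-θ * Complex.I), (Real.cos (π / q) : ℂ), 1])
    (hHerm : H.IsHermitian) :
    ((Finset.univ.filter fun i => 0 < hHerm.eigenvalues i).card = 2 ∧
      (Finset.univ.filter fun i => hHerm.eigenvalues i < 0).card = 1) ↔
    Real.cos θ < (-1 + Real.cos (π / p) ^ 2 + Real.cos (π / q) ^ 2 + Real.cos (π / r) ^ 2) /
      (2 * Real.cos (π / p) * Real.cos (π / q) * Real.cos (π / r)) := by
  have hcos {n : ℤ} (hn : 3 ≤ n) : 0 < Real.cos (π / n) :=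
    cos_pi_div_pos (by exact_mod_cast (show (2 : ℤ) < n by omega))
  have hpos : 0 < 2 * Real.cos (π / p) * Real.cos (π / q) * Real.cos (π / r) := by
    have := hcos hp; have := hcos hq; have := hcos hr; positivity
  set a := Real.cos (π / p)
  set b := Real.cos (π / q)
  set c := Real.cos (π / r)
  have htrace : H.trace = 3 := by
    rw [hH, trace_fin_three]
    simp only [of_apply, cons_val', cons_val_zero, cons_val_one, cons_val_two, cons_val_fin_one,
      empty_val']
    norm_num
  have hsum : ∑ i, hHerm.eigenvalues i = 3 := by
    apply RCLike.ofReal_injective (K := ℂ)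
    rw [RCLike.ofReal_sum, ← hHerm.trace_eq_sum_eigenvalues, htrace]
    rfl
  have hprod : ∏ i, hHerm.eigenvalues i = 1 - a ^ 2 - b ^ 2 - c ^ 2 + 2 * a * b * c * Real.cos θ := by
    apply RCLike.ofReal_injective (K := ℂ)
    rw [RCLike.ofReal_prod, ← hHerm.det_eq_prod_eigenvalues, hH, det_gram]
    rfl
  rw [signature_two_one_iff_prod_neg (by linarith), hprod, lt_div_iff₀ hpos]
  constructor <;> intro <;> linarith
end

section
/- For r ≥ 4, the value cos(π/r) − 3/(4cos(π/r)) is strictly less than (−1 + 2cos²(π/r))/cos(π/r), and lies in [−1, 1); hence there exists θ ∈ (0, π] with cos θ = cos(π/r) − 3/(4cos(π/r)) satisfying the signature condition for a (3,3,r) complex hyperbolic triangle group. -/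
open Real

/-- The angular invariant θ_∞ with I₃I₂I₁I₂ unipotent exists and satisfies the signature
condition for a (3,3,r) complex hyperbolic triangle group. -/
theorem theta_infty_exists (r : ℤ) (hr : 4 ≤ r) :
    Real.cos (π / r) - 3 / (4 * Real.cos (π / r)) <
        (-1 + 2 * Real.cos (π / r) ^ 2) / Real.cos (π / r) ∧
      Real.cos (π / r) - 3 / (4 * Real.cos (π / r)) ∈ Set.Ico (-1 : ℝ) 1 ∧
      ∃ θ ∈ Set.Ioc (0 : ℝ) π,
        Real.cos θ = Real.cos (π / r) - 3 / (4 * Real.cos (π / r)) ∧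
        Real.cos θ < (-1 + 2 * Real.cos (π / r) ^ 2) / Real.cos (π / r) := by
  have hr4 : (4:ℝ) ≤ (r:ℝ) := by exact_mod_cast hr
  have hr0 : (0:ℝ) < (r:ℝ) := by linarith
  set x := π / (r:ℝ) with hx
  have hx0 : 0 < x := div_pos pi_pos hr0
  have hx4 : x ≤ π / 4 := div_le_div_of_nonneg_left pi_pos.le (by norm_num) hr4
  have hxpi : x ≤ π := hx4.trans (by linarith [pi_pos])
  set c := Real.cos x with hc
  have hc1 : c < 1 := by
    have := Real.cos_lt_cos_of_nonneg_of_le_pi le_rfl hxpi hx0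
    simpa using this
  have hcge : Real.sqrt 2 / 2 ≤ c := by
    have := Real.cos_le_cos_of_nonneg_of_le_pi hx0.le (by linarith [pi_pos]) hx4
    simpa [Real.cos_pi_div_four] using this
  have hs2 : (Real.sqrt 2) ^ 2 = 2 := Real.sq_sqrt (by norm_num)
  have hs2n : 0 ≤ Real.sqrt 2 := Real.sqrt_nonneg 2
  have hcsq : 1/2 ≤ c ^ 2 := by nlinarith
  have hc0 : 0 < c := by nlinarith
  have hdiff : c - 3 / (4 * c) - ((-1 + 2 * c ^ 2) / c) = (1 - 4 * c ^ 2) / (4 * c) := by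
    field_simp; ring
  have hneg : (1 - 4 * c ^ 2) / (4 * c) < 0 :=
    div_neg_of_neg_of_pos (by nlinarith) (by linarith)
  have key1 : c - 3 / (4 * c) < (-1 + 2 * c ^ 2) / c := by linarith [hdiff ▸ hneg]
  have hv : c - 3 / (4 * c) = (4 * c ^ 2 - 3) / (4 * c) := by field_simp
  have hlb : (-1:ℝ) ≤ c - 3 / (4 * c) := by
    rw [hv, le_div_iff₀ (by linarith)]
    nlinarith
  have hub : c - 3 / (4 * c) < 1 := by
    rw [hv, div_lt_one (by linarith)]
    nlinarith
  refine ⟨key1, ⟨hlb, hub⟩, Real.arccos (c - 3 / (4 * c)), ⟨?_, Real.arccos_le_pi _⟩, ?_, ?_⟩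
  · exact Real.arccos_pos.mpr hub
  · exact Real.cos_arccos hlb hub.le
  · rw [Real.cos_arccos hlb hub.le]; exact key1
end

section
/- In any group G, if elements a, b satisfy a⁴ = e, b³ = e, and (a⁻¹b)³ = e, then a²ba⁻¹b⁻²a⁻¹ba = e. -/
theorem m004_relation {G : Type*} [Group G] (a b : G)
    (ha : a ^ 4 = 1) (hb : b ^ 3 = 1) (hab : (a⁻¹ * b) ^ 3 = 1) :
    a ^ 2 * b * a⁻¹ * b⁻¹ ^ 2 * a⁻¹ * b * a = 1 := by
  have h1 : a⁻¹ * b * (a⁻¹ * b) = b⁻¹ * a := by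
    have h2 : (a⁻¹ * b) ^ 2 * (a⁻¹ * b) = 1 := by rw [← pow_succ]; exact hab
    have h3 : (a⁻¹ * b) ^ 2 = (a⁻¹ * b)⁻¹ := eq_inv_of_mul_eq_one_left h2
    rw [← sq, h3]; group
  have hbi : b⁻¹ ^ 2 = b := by
    have h2 : b ^ 2 * b = 1 := by rw [← pow_succ]; exact hb
    have h3 : b ^ 2 = b⁻¹ := eq_inv_of_mul_eq_one_left h2
    rw [inv_pow, h3, inv_inv]
  rw [hbi]
  calc a ^ 2 * b * a⁻¹ * b * a⁻¹ * b * a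
      = a ^ 2 * b * (a⁻¹ * b * (a⁻¹ * b)) * a := by group
    _ = a ^ 2 * b * (b⁻¹ * a) * a := by rw [h1]
    _ = a ^ 4 := by group
    _ = 1 := ha
end

section
/- Let Λ = ⟨x, y | x³ = y³ = (xy)⁴ = e⟩. The assignment a ↦ xy, b ↦ y extends to a group homomorphism ρ from the group ⟨a, b | a²ba⁻¹b⁻²a⁻¹ba⟩ to Λ, and ρ is surjective (since ρ(ab⁻¹) = x and ρ(b) = y). -/
namespace Stmt10

/-- a, b -/
def a : FreeGroup (Fin 2) := FreeGroup.of 0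
def b : FreeGroup (Fin 2) := FreeGroup.of 1

/-- the relator a²bA B²A ba of π₁(m004) -/
def m004Rels : Set (FreeGroup (Fin 2)) :=
  {a ^ 2 * b * a⁻¹ * b⁻¹ ^ 2 * a⁻¹ * b * a}

/-- x, y -/
def x : FreeGroup (Fin 2) := FreeGroup.of 0
def y : FreeGroup (Fin 2) := FreeGroup.of 1

/-- relators of Λ₂(3,3,4) = ⟨x,y | x³ = y³ = (xy)⁴ = e⟩ -/
def lambdaRels : Set (FreeGroup (Fin 2)) := {x ^ 3, y ^ 3, (x * y) ^ 4}

private def f : Fin 2 → PresentedGroup lambdaRels :=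
  ![PresentedGroup.of 0 * PresentedGroup.of 1, PresentedGroup.of 1]

private lemma rel_one (r : FreeGroup (Fin 2)) (hr : r ∈ lambdaRels) :
    PresentedGroup.mk lambdaRels r = 1 := by
  exact (QuotientGroup.eq_one_iff r).mpr (Subgroup.subset_normalClosure hr)

private lemma hX : (PresentedGroup.of 0 : PresentedGroup lambdaRels) ^ 3 = 1 := by
  have := rel_one (x ^ 3) (Or.inl rfl)
  simpa [x, PresentedGroup.of] using this

private lemma hY : (PresentedGroup.of 1 : PresentedGroup lambdaRels) ^ 3 = 1 := by
  have := rel_one (y ^ 3) (Or.inr (Or.inl rfl))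
  simpa [y, PresentedGroup.of] using this

private lemma hXY :
    ((PresentedGroup.of 0 : PresentedGroup lambdaRels) * PresentedGroup.of 1) ^ 4 = 1 := by
  have := rel_one ((x * y) ^ 4) (Or.inr (Or.inr rfl))
  simpa [x, y, PresentedGroup.of] using this

private lemma hrels : ∀ r ∈ m004Rels, FreeGroup.lift f r = 1 := by
  intro r hr
  rw [m004Rels, Set.mem_singleton_iff] at hr
  subst hr
  set X : PresentedGroup lambdaRels := PresentedGroup.of 0 with hXdef
  set Y : PresentedGroup lambdaRels := PresentedGroup.of 1 with hYdef
  have hyi : Y⁻¹ * Y⁻¹ * Y⁻¹ = 1 := by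
    rw [← mul_inv_rev, ← mul_inv_rev, ← pow_three, hY, inv_one]
  have hxi : X⁻¹ * X⁻¹ = X := by
    rw [← mul_inv_rev, ← pow_two, inv_eq_iff_mul_eq_one, ← pow_succ]
    exact hX
  simp only [map_mul, map_pow, map_inv, a, b, FreeGroup.lift_apply_of, f,
    Matrix.cons_val_zero, Matrix.cons_val_one, Matrix.head_cons]
  show (X * Y) ^ 2 * Y * (X * Y)⁻¹ * Y⁻¹ ^ 2 * (X * Y)⁻¹ * Y * (X * Y) = 1
  calc (X * Y) ^ 2 * Y * (X * Y)⁻¹ * Y⁻¹ ^ 2 * (X * Y)⁻¹ * Y * (X * Y)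
      = X * Y * X * Y * (X⁻¹ * ((Y⁻¹ * Y⁻¹ * Y⁻¹) * X⁻¹)) * (Y * X * Y) := by
        simp only [pow_succ, pow_zero, one_mul, mul_inv_rev, mul_assoc]
        group
    _ = X * Y * X * Y * (X⁻¹ * X⁻¹) * (Y * X * Y) := by rw [hyi, one_mul]
    _ = X * Y * X * Y * X * (Y * X * Y) := by rw [hxi]
    _ = (X * Y) ^ 4 := by
        simp only [pow_succ, pow_zero, one_mul, mul_assoc]
    _ = 1 := hXY

/-- The assignment a ↦ xy, b ↦ y defines a surjective homomorphism
π₁(m004) → Λ₂(3,3,4). -/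
theorem m004_to_Lambda334 :
    ∃ ρ : PresentedGroup m004Rels →* PresentedGroup lambdaRels,
      ρ (PresentedGroup.of 0) = PresentedGroup.of 0 * PresentedGroup.of 1 ∧
      ρ (PresentedGroup.of 1) = PresentedGroup.of 1 ∧
      Function.Surjective ρ := by
  refine ⟨PresentedGroup.toGroup hrels, PresentedGroup.toGroup.of hrels,
    PresentedGroup.toGroup.of hrels, ?_⟩
  rw [← MonoidHom.range_eq_top, ← top_le_iff, ← PresentedGroup.closure_range_of lambdaRels,
    Subgroup.closure_le]
  rintro _ ⟨i, rfl⟩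
  fin_cases i
  · -- X = ρ(a) * ρ(b)⁻¹
    refine ⟨PresentedGroup.of 0 * (PresentedGroup.of 1)⁻¹, ?_⟩
    simp [PresentedGroup.toGroup.of hrels, f]
  · exact ⟨PresentedGroup.of 1, PresentedGroup.toGroup.of hrels⟩

end Stmt10
end

section
/- In any group G, if elements a, b satisfy a⁷ = e, b³ = e, and (a⁻¹b⁻¹)³ = e, then a⁶b⁻¹a⁻¹b²a⁻¹b⁻¹ = e. -/
theorem m039_relation {G : Type*} [Group G] (a b : G)
    (ha : a ^ 7 = 1) (hb : b ^ 3 = 1) (hab : (a⁻¹ * b⁻¹) ^ 3 = 1) :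
    a ^ 6 * b⁻¹ * a⁻¹ * b ^ 2 * a⁻¹ * b⁻¹ = 1 := by
  have h6 : a ^ 6 = a⁻¹ := eq_inv_of_mul_eq_one_left (by rw [← pow_succ]; exact ha)
  have h2 : b ^ 2 = b⁻¹ := eq_inv_of_mul_eq_one_left (by rw [← pow_succ]; exact hb)
  rw [h6, h2]
  calc a⁻¹ * b⁻¹ * a⁻¹ * b⁻¹ * a⁻¹ * b⁻¹ = (a⁻¹ * b⁻¹) ^ 3 := by rw [pow_succ, pow_succ, pow_one]; simp [mul_assoc]
    _ = 1 := hab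
end

section
/- In any group G, if elements a, b satisfy a³ = e, b³ = e, and (ab⁻¹)⁵ = e, then ab²aB ab²aB a⁴ B = e, i.e., the word ab²aBab²aBa⁴B (with B = b⁻¹) equals the identity. -/
theorem m142_relation {G : Type*} [Group G] (a b : G)
    (ha : a ^ 3 = 1) (hb : b ^ 3 = 1) (hab : (a * b⁻¹) ^ 5 = 1) :
    a * b ^ 2 * a * b⁻¹ * a * b ^ 2 * a * b⁻¹ * a ^ 4 * b⁻¹ = 1 := by
  have h1 : b ^ 2 = b⁻¹ := by
    rw [eq_inv_iff_mul_eq_one, ← pow_succ, hb]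
  have h2 : a ^ 4 = a := by
    rw [show (4:ℕ) = 3 + 1 from rfl, pow_add, ha, one_mul, pow_one]
  rw [h1, h2, ← hab]
  simp [pow_succ, mul_assoc]
end
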